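/- Suppose M ≥ 3 and α, α̃ are two nonnegative 3×M channel strength matrices that both satisfy conditions (C1) and (C2) and that agree in their first three columns, i.e., α_{im} = α̃_{im} for all i ∈ {1,2,3} and m ∈ {1,2,3}. Then the region D computed from α equals the region D computed from α̃; in other words, under (C1) and (C2) the region D does not depend on the entries α_{km} with m > 3. -/
import Mathlib


/-- `δ_i = max_m α_{im}` for a 3×M channel strength matrix. -/
noncomputable def deltaI (M : ℕ) (α : Fin 3 → Fin M → ℝ) (i : Fin 3) : ℝ :=
  ⨆ m : Fin M, α i m

/-- `δ_{i,j} = max_m (α_{im} − α_{jm})⁺`. -/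
noncomputable def deltaIJ (M : ℕ) (α : Fin 3 → Fin M → ℝ) (i j : Fin 3) : ℝ :=
  ⨆ m : Fin M, max (α i m - α j m) 0

/-- `δ`: the minimum over all orderings `(i,j,k)` of `{1,2,3}` of
`min(δ_i + δ_{j,i} + δ_{k,j}, (δ_i + δ_k + δ_{i,j} + δ_{j,i} + δ_{j,k} + δ_{k,i})/2)`. -/
noncomputable def deltaTot (M : ℕ) (α : Fin 3 → Fin M → ℝ) : ℝ :=
  ⨅ p : Equiv.Perm (Fin 3),
    min (deltaI M α (p 0) + deltaIJ M α (p 1) (p 0) + deltaIJ M α (p 2) (p 1))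
      ((deltaI M α (p 0) + deltaI M α (p 2) + deltaIJ M α (p 0) (p 1) +
        deltaIJ M α (p 1) (p 0) + deltaIJ M α (p 1) (p 2) + deltaIJ M α (p 2) (p 0)) / 2)

/-- The GDoF region `D` of the main theorem, described by `δ_i`, `δ_{i,k}`, `δ`. -/
noncomputable def Dregion (M : ℕ) (α : Fin 3 → Fin M → ℝ) : Set (Fin 3 → ℝ) :=
  { d | (∀ i : Fin 3, 0 ≤ d i ∧ d i ≤ deltaI M α i) ∧
        (∀ i k : Fin 3, i ≠ k →
          d i + d k ≤ min (deltaI M α i + deltaIJ M α k i) (deltaI M α k + deltaIJ M α i k)) ∧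
        d 0 + d 1 + d 2 ≤ deltaTot M α }

/-- Condition (C1). -/
def CondC1 (M : ℕ) (hM : 3 ≤ M) (α : Fin 3 → Fin M → ℝ) : Prop :=
  ∀ (i k : Fin 3) (m : Fin M),
    max (α i m) (α k (Fin.castLE hM i)) ≤ α i (Fin.castLE hM i)

/-- Condition (C2). -/
def CondC2 (M : ℕ) (hM : 3 ≤ M) (α : Fin 3 → Fin M → ℝ) : Prop :=
  ∀ (i k : Fin 3) (m : Fin M),
    α k (Fin.castLE hM i) + α i m ≤ α i (Fin.castLE hM i) + α k m


lemma deltaI_eq (M : ℕ) (hM : 3 ≤ M) (α : Fin 3 → Fin M → ℝ)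
    (h1 : CondC1 M hM α) (i : Fin 3) :
    deltaI M α i = α i (Fin.castLE hM i) := by
  have hne : Nonempty (Fin M) := ⟨Fin.castLE hM i⟩
  refine le_antisymm (ciSup_le fun m => ?_) (le_ciSup (Set.finite_range _).bddAbove _)
  exact le_trans (le_max_left _ (α i (Fin.castLE hM i))) (h1 i i m)

lemma deltaIJ_eq (M : ℕ) (hM : 3 ≤ M) (α : Fin 3 → Fin M → ℝ)
    (h1 : CondC1 M hM α) (h2 : CondC2 M hM α) (i j : Fin 3) :
    deltaIJ M α i j = α i (Fin.castLE hM i) - α j (Fin.castLE hM i) := by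
  have hne : Nonempty (Fin M) := ⟨Fin.castLE hM i⟩
  unfold deltaIJ
  refine le_antisymm (ciSup_le fun m => max_le ?_ ?_) ?_
  · have := h2 i j m; linarith
  · have := le_trans (le_max_right (α i m) _) (h1 i j m); linarith
  · calc α i (Fin.castLE hM i) - α j (Fin.castLE hM i)
        ≤ max (α i (Fin.castLE hM i) - α j (Fin.castLE hM i)) 0 := le_max_left _ _
      _ ≤ _ := le_ciSup (f := fun m => max (α i m - α j m) 0) (Set.finite_range _).bddAbove (Fin.castLE hM i)

/-- Under (C1) and (C2), the region `D` depends only on the first three columns of `α`. -/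
theorem Dregion_eq_of_agree_first_three (M : ℕ) (hM : 3 ≤ M)
    (α α' : Fin 3 → Fin M → ℝ)
    (hα : ∀ (i : Fin 3) (m : Fin M), 0 ≤ α i m)
    (hα' : ∀ (i : Fin 3) (m : Fin M), 0 ≤ α' i m)
    (h1 : CondC1 M hM α) (h2 : CondC2 M hM α)
    (h1' : CondC1 M hM α') (h2' : CondC2 M hM α')
    (hagree : ∀ (i : Fin 3) (m : Fin 3), α i (Fin.castLE hM m) = α' i (Fin.castLE hM m)) :
    Dregion M α = Dregion M α' := by
  have eI : deltaI M α = deltaI M α' := by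
    funext i
    rw [deltaI_eq M hM α h1, deltaI_eq M hM α' h1', hagree]
  have eIJ : deltaIJ M α = deltaIJ M α' := by
    funext i j
    rw [deltaIJ_eq M hM α h1 h2, deltaIJ_eq M hM α' h1' h2', hagree, hagree]
  have eT : deltaTot M α = deltaTot M α' := by
    unfold deltaTot; rw [eI, eIJ]
  unfold Dregion; rw [eI, eIJ, eT]
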